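/- arXiv:2603.22814 — 7 statements merged into one kernel-verified Lean document; each statement's English description precedes it below -/
import Mathlib

section
/- For every subset S ⊆ A, the total disagreement of the dichotomous weak order O_S with the profile R equals Σ over ordered pairs (a,b) with a ∈ S and b ∈ A∖S of (2·N(b,a) + E(b,a)), plus Σ over unordered pairs {a,b} of distinct alternatives lying in the same class (both in S or both in A∖S) of (N(a,b) + N(b,a)). -/
/-- Number of voters strictly preferring `a` to `b`. -/
def Nvot {α : Type} [Fintype α] [DecidableEq α] {n : ℕ}
    (R : Fin n → α → α → Bool) (a b : α) : ℕ :=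
  (Finset.univ.filter (fun i : Fin n => R i a b ∧ ¬ R i b a)).card

/-- Number of voters indifferent between `a` and `b`. -/
def Evot {α : Type} [Fintype α] [DecidableEq α] {n : ℕ}
    (R : Fin n → α → α → Bool) (a b : α) : ℕ :=
  (Finset.univ.filter (fun i : Fin n => R i a b ∧ R i b a)).card

/-- The dichotomous weak order with top class `S` contains `(a,b)` iff `a ∈ S ∨ b ∉ S`. -/
def OS {α : Type} [DecidableEq α] (S : Finset α) (a b : α) : Bool :=
  decide (a ∈ S ∨ b ∉ S)

/-- Total number of disagreements between the profile `R` and the dichotomous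
weak order with top class `S`. -/
def totalDisagreement {α : Type} [Fintype α] [DecidableEq α] {n : ℕ}
    (R : Fin n → α → α → Bool) (S : Finset α) : ℕ :=
  ∑ i : Fin n,
    ((Finset.univ : Finset (α × α)).filter
      (fun p => R i p.1 p.2 ≠ OS S p.1 p.2)).card

/-- Vertices of the network `G(R)`: a source, a sink, one node per alternative,
and one node per ordered pair of (distinct) alternatives. -/
inductive Vertex (α : Type) where
  | s : Vertex α
  | t : Vertex α
  | alt : α → Vertex α
  | pair : α → α → Vertex α

/-- `C` describes an s-t cut: `A* = {x | C x = true}`, `B* = {x | C x = false}`,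
with `s ∈ A*` and `t ∈ B*`. -/
def IsCut {α : Type} (C : Vertex α → Bool) : Prop :=
  C .s = true ∧ C .t = false

/-- A cut is consistent if each pair node `v_(a,b)` is on the same side as `a`. -/
def Consistent {α : Type} (C : Vertex α → Bool) : Prop :=
  ∀ a b : α, a ≠ b → C (.pair a b) = C (.alt a)

/-- The capacity of the cut described by `C`: the total weight of arcs going
from `A*` to `B*`, where for each ordered pair `(a,b)` of distinct alternatives
the arcs are `(s, v_(a,b))` of weight `N(a,b)`, `(v_(a,b), t)` of weight `N(b,a)`,
`(a, v_(a,b))` and `(v_(a,b), a)` of weight `L`, and `(a, b)` of weight `E(b,a)`. -/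
def cutCapacity {α : Type} [Fintype α] [DecidableEq α] {n : ℕ}
    (R : Fin n → α → α → Bool) (L : ℕ) (C : Vertex α → Bool) : ℕ :=
  ∑ p ∈ (Finset.univ : Finset (α × α)).filter (fun p => p.1 ≠ p.2),
    ((if C .s ∧ ¬ C (.pair p.1 p.2) then Nvot R p.1 p.2 else 0) +
     (if C (.pair p.1 p.2) ∧ ¬ C .t then Nvot R p.2 p.1 else 0) +
     (if C (.alt p.1) ∧ ¬ C (.pair p.1 p.2) then L else 0) +
     (if C (.pair p.1 p.2) ∧ ¬ C (.alt p.1) then L else 0) +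
     (if C (.alt p.1) ∧ ¬ C (.alt p.2) then Evot R p.2 p.1 else 0))

/-- The total weight of arcs of the pair gadget of `{a,b}` that go from `A*` to `B*`.
The gadget consists of the arcs `(s,v_(a,b))`, `(s,v_(b,a))`, `(v_(a,b),t)`,
`(v_(b,a),t)`, `(a,v_(a,b))`, `(v_(a,b),a)`, `(b,v_(b,a))`, `(v_(b,a),b)`,
`(a,b)` and `(b,a)`. -/
def gadgetCrossWeight {α : Type} [Fintype α] [DecidableEq α] {n : ℕ}
    (R : Fin n → α → α → Bool) (L : ℕ) (C : Vertex α → Bool) (a b : α) : ℕ :=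
  (if C .s ∧ ¬ C (.pair a b) then Nvot R a b else 0) +
  (if C .s ∧ ¬ C (.pair b a) then Nvot R b a else 0) +
  (if C (.pair a b) ∧ ¬ C .t then Nvot R b a else 0) +
  (if C (.pair b a) ∧ ¬ C .t then Nvot R a b else 0) +
  (if C (.alt a) ∧ ¬ C (.pair a b) then L else 0) +
  (if C (.pair a b) ∧ ¬ C (.alt a) then L else 0) +
  (if C (.alt b) ∧ ¬ C (.pair b a) then L else 0) +
  (if C (.pair b a) ∧ ¬ C (.alt b) then L else 0) +
  (if C (.alt a) ∧ ¬ C (.alt b) then Evot R b a else 0) +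
  (if C (.alt b) ∧ ¬ C (.alt a) then Evot R a b else 0)

/-! Voter `i` disagrees with `O_S` on `(a, b)` either by omitting a pair that `O_S` contains,
which by completeness means strictly preferring `b` to `a`, or by containing a pair that `O_S`
omits, i.e. weakly preferring `a` to `b`; and `O_S` omits `(a, b)` only when `a ∉ S` and `b ∈ S`.
So for `a ∈ S`, `b ∉ S` the pairs `(a, b)` and `(b, a)` together cost `2 N(b,a) + E(b,a)`, two
distinct alternatives of the same class cost `N(b,a) + N(a,b)`, and `(a, a)` costs `N(a,a) = 0`. -/

open Finset

theorem Finset.sum_filter_swap {α β M : Type*} [Fintype α] [Fintype β] [AddCommMonoid M]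
    (Q : α × β → Prop) [DecidablePred Q] (g : β × α → M) :
    ∑ p ∈ univ.filter (fun p => Q p.swap), g p = ∑ p ∈ univ.filter Q, g p.swap :=
  sum_equiv (Equiv.prodComm β α) (by simp) (by simp)

theorem Finset.sum_sym2_filter_not_isDiag_lift_add {α M : Type*} [Fintype α] [DecidableEq α]
    [AddCommMonoid M] (P : Sym2 α → Prop) [DecidablePred P] (f : α → α → M) :
    ∑ e ∈ univ.filter (fun e : Sym2 α => ¬ e.IsDiag ∧ P e),
        Sym2.lift ⟨fun a b => f a b + f b a, fun _ _ => add_comm _ _⟩ e =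
      ∑ p ∈ univ.filter (fun p : α × α => p.1 ≠ p.2 ∧ P s(p.1, p.2)), f p.1 p.2 := by
  rw [← sum_fiberwise_of_maps_to (g := fun p : α × α => s(p.1, p.2))
    (t := univ.filter fun e : Sym2 α => ¬ e.IsDiag ∧ P e) (fun p hp => by simpa using hp)]
  refine sum_congr rfl fun e he => ?_
  induction e using Sym2.ind with
  | _ a b =>
    obtain ⟨hab, hP⟩ : a ≠ b ∧ P s(a, b) := by simpa using he
    have hfiber : (univ.filter fun p : α × α => p.1 ≠ p.2 ∧ P s(p.1, p.2)).filter
        (fun p => s(p.1, p.2) = s(a, b)) = {(a, b), (b, a)} := by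
      ext ⟨x, y⟩
      simp only [mem_filter, mem_univ, true_and, mem_insert, mem_singleton, Prod.mk.injEq]
      constructor
      · rintro ⟨-, h⟩
        exact Sym2.eq_iff.mp h
      · rintro (⟨rfl, rfl⟩ | ⟨rfl, rfl⟩)
        · exact ⟨⟨hab, hP⟩, rfl⟩
        · exact ⟨⟨hab.symm, by rwa [Sym2.eq_swap]⟩, Sym2.eq_swap⟩
    rw [hfiber, sum_pair (by simp [hab]), Sym2.lift_mk]

section Disagreement

variable {α : Type} [Fintype α] [DecidableEq α] {n : ℕ} (R : Fin n → α → α → Bool)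

def disagreementCount (S : Finset α) (a b : α) : ℕ :=
  #{i | R i a b ≠ OS S a b}

theorem totalDisagreement_eq_sum_disagreementCount (S : Finset α) :
    totalDisagreement R S = ∑ p : α × α, disagreementCount R S p.1 p.2 := by
  simp only [totalDisagreement, disagreementCount, card_filter]
  exact sum_comm

theorem Nvot_self (a : α) : Nvot R a a = 0 := by
  simp [Nvot]

theorem card_filter_eq_true_eq_Nvot_add_Evot (a b : α) :
    #{i | R i a b = true} = Nvot R a b + Evot R a b := by
  rw [Nvot, Evot, ← card_filter_add_card_filter_not (fun i => R i b a = true), filter_filter,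
    filter_filter, add_comm]

theorem card_filter_eq_false_eq_Nvot
    (hcomp : ∀ (i : Fin n) (a b : α), R i a b = true ∨ R i b a = true) (a b : α) :
    #{i | R i a b = false} = Nvot R b a := by
  rw [Nvot]
  congr 1
  ext i
  simp only [mem_filter, mem_univ, true_and]
  rcases hcomp i a b with h | h <;> simp [h]

theorem disagreementCount_eq
    (hcomp : ∀ (i : Fin n) (a b : α), R i a b = true ∨ R i b a = true) (S : Finset α) (a b : α) :
    disagreementCount R S a b =
      if a ∉ S ∧ b ∈ S then Nvot R a b + Evot R a b else Nvot R b a := by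
  rw [disagreementCount]
  split_ifs with h
  · have hO : OS S a b = false := by simpa [OS] using h
    simpa [hO] using card_filter_eq_true_eq_Nvot_add_Evot R a b
  · have hO : OS S a b = true := by simpa [OS, or_iff_not_imp_left] using h
    simpa [hO] using card_filter_eq_false_eq_Nvot R hcomp a b

end Disagreement

/-- For every `S ⊆ A`, the total disagreement of the dichotomous
weak order `O_S` with the profile `R` equals the sum over ordered pairs `(a,b)`
with `a ∈ S`, `b ∉ S` of `2·N(b,a) + E(b,a)`, plus the sum over unordered pairs
of distinct alternatives lying in the same class of `N(a,b) + N(b,a)`. -/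
theorem stmt0 {α : Type} [Fintype α] [DecidableEq α] {n : ℕ}
    (R : Fin n → α → α → Bool)
    (hcomp : ∀ (i : Fin n) (a b : α), R i a b = true ∨ R i b a = true)
    (S : Finset α) :
    totalDisagreement R S =
      (∑ p ∈ (Finset.univ : Finset (α × α)).filter (fun p => p.1 ∈ S ∧ p.2 ∉ S),
        (2 * Nvot R p.2 p.1 + Evot R p.2 p.1)) +
      (∑ e ∈ (Finset.univ : Finset (Sym2 α)).filter (fun e => ¬ e.IsDiag ∧
            Sym2.lift ⟨fun a b => decide ((a ∈ S ∧ b ∈ S) ∨ (a ∉ S ∧ b ∉ S)),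
              fun a b => by simp [and_comm, or_comm]⟩ e = true),
        Sym2.lift ⟨fun a b => Nvot R a b + Nvot R b a, fun a b => add_comm _ _⟩ e) := by
  have hcross : ∑ p ∈ univ.filter (fun p : α × α => p.1 ∈ S ∧ p.2 ∉ S),
        (2 * Nvot R p.2 p.1 + Evot R p.2 p.1) =
      ∑ p ∈ univ.filter (fun p : α × α => p.2 ∈ S ∧ p.1 ∉ S), Nvot R p.1 p.2 +
        ∑ p ∈ univ.filter (fun p : α × α => p.1 ∈ S ∧ p.2 ∉ S),
          (Nvot R p.2 p.1 + Evot R p.2 p.1) := by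
    have hswap : ∑ p ∈ univ.filter (fun p : α × α => p.2 ∈ S ∧ p.1 ∉ S), Nvot R p.1 p.2 =
        ∑ p ∈ univ.filter (fun p : α × α => p.1 ∈ S ∧ p.2 ∉ S), Nvot R p.2 p.1 :=
      sum_filter_swap (fun p : α × α => p.1 ∈ S ∧ p.2 ∉ S) fun p => Nvot R p.1 p.2
    rw [hswap, ← sum_add_distrib]
    exact sum_congr rfl fun p _ => by ring
  rw [totalDisagreement_eq_sum_disagreementCount, ← (Equiv.prodComm α α).sum_comp,
    sum_sym2_filter_not_isDiag_lift_add, hcross]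
  simp only [sum_filter, ← sum_add_distrib]
  refine sum_congr rfl fun ⟨a, b⟩ _ => ?_
  simp only [disagreementCount_eq R hcomp, Equiv.prodComm_apply, Prod.swap, Sym2.lift_mk,
    decide_eq_true_eq]
  by_cases ha : a ∈ S <;> by_cases hb : b ∈ S <;> by_cases hab : a = b <;> simp [ha, hb, hab, Nvot_self]
end

section
/- Let (A*,B*) be a consistent s-t cut of the network G(R) and let a,b be distinct alternatives with the node of a in A* and the node of b in B*. Then the total weight of arcs of the pair gadget of {a,b} that go from A* to B* equals 2·N(b,a) + E(b,a); moreover no arc of weight L crosses the cut within this gadget. (The pair gadget of {a,b} consists of the arcs (s,v_(a,b)), (s,v_(b,a)), (v_(a,b),t), (v_(b,a),t), (a,v_(a,b)), (v_(a,b),a), (b,v_(b,a)), (v_(b,a),b), (a,b) and (b,a).) -/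
/-- Let `(A*,B*)` be a consistent s-t cut of `G(R)` and `a ≠ b`
with the node of `a` in `A*` and the node of `b` in `B*`. Then the total weight of
arcs of the pair gadget of `{a,b}` that go from `A*` to `B*` equals
`2·N(b,a) + E(b,a)`; moreover, no arc of weight `L` (i.e. none of the arcs
`(a,v_(a,b))`, `(v_(a,b),a)`, `(b,v_(b,a))`, `(v_(b,a),b)`) crosses the cut. -/
theorem stmt1 {α : Type} [Fintype α] [DecidableEq α] {n : ℕ}
    (R : Fin n → α → α → Bool)
    (hrefl : ∀ (i : Fin n) (a : α), R i a a = true)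
    (hcomp : ∀ (i : Fin n) (a b : α), R i a b = true ∨ R i b a = true)
    (L : ℕ) (hL : L > (Fintype.card α * n) ^ 5)
    (C : Vertex α → Bool) (hcut : IsCut C) (hcons : Consistent C)
    (a b : α) (hab : a ≠ b)
    (ha : C (.alt a) = true) (hb : C (.alt b) = false) :
    gadgetCrossWeight R L C a b = 2 * Nvot R b a + Evot R b a ∧
    ¬ (C (.alt a) ∧ ¬ C (.pair a b)) ∧ ¬ (C (.pair a b) ∧ ¬ C (.alt a)) ∧
    ¬ (C (.alt b) ∧ ¬ C (.pair b a)) ∧ ¬ (C (.pair b a) ∧ ¬ C (.alt b)) := by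
  have h1 : C (.pair a b) = true := (hcons a b hab).trans ha
  have h2 : C (.pair b a) = false := (hcons b a hab.symm).trans hb
  obtain ⟨hs, ht⟩ := hcut
  simp [gadgetCrossWeight, h1, h2, ha, hb, hs, ht, two_mul]
end

section
/- Let (A*,B*) be a consistent s-t cut of the network G(R) and let a,b be distinct alternatives whose nodes lie on the same side of the cut (both in A* or both in B*). Then the total weight of arcs of the pair gadget of {a,b} that go from A* to B* equals N(a,b) + N(b,a). (The pair gadget of {a,b} consists of the arcs (s,v_(a,b)), (s,v_(b,a)), (v_(a,b),t), (v_(b,a),t), (a,v_(a,b)), (v_(a,b),a), (b,v_(b,a)), (v_(b,a),b), (a,b) and (b,a).) -/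
/-- Let `(A*,B*)` be a consistent s-t cut of `G(R)` and let
`a ≠ b` be alternatives whose nodes lie on the same side of the cut. Then the
total weight of arcs of the pair gadget of `{a,b}` that go from `A*` to `B*`
equals `N(a,b) + N(b,a)`. -/
theorem stmt2 {α : Type} [Fintype α] [DecidableEq α] {n : ℕ}
    (R : Fin n → α → α → Bool)
    (hrefl : ∀ (i : Fin n) (a : α), R i a a = true)
    (hcomp : ∀ (i : Fin n) (a b : α), R i a b = true ∨ R i b a = true)
    (L : ℕ) (hL : L > (Fintype.card α * n) ^ 5)
    (C : Vertex α → Bool) (hcut : IsCut C) (hcons : Consistent C)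
    (a b : α) (hab : a ≠ b)
    (hside : C (.alt a) = C (.alt b)) :
    gadgetCrossWeight R L C a b = Nvot R a b + Nvot R b a := by
  obtain ⟨hs, ht⟩ := hcut
  have h1 := hcons a b hab
  have h2 := hcons b a hab.symm
  unfold gadgetCrossWeight
  rw [hs, ht, h1, h2, hside]
  cases C (.alt b) <;> simp <;> omega
end

section
/- Every consistent s-t cut of the network G(R) has capacity at most Σ over ordered pairs (a,b) of distinct alternatives of (N(a,b) + N(b,a) + E(b,a)), which is at most 3·n·m²; in particular, the capacity of every consistent cut, and hence the minimum cut capacity of G(R), is strictly less than L. -/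
/-- Every consistent s-t cut of `G(R)` has capacity at most
`Σ_{(a,b), a ≠ b} (N(a,b) + N(b,a) + E(b,a))`, which is at most `3·n·m²`; in
particular the capacity of every consistent cut, and hence the minimum cut
capacity of `G(R)`, is strictly less than `L`. -/
theorem stmt3 {α : Type} [Fintype α] [DecidableEq α] {n : ℕ}
    (R : Fin n → α → α → Bool)
    (hrefl : ∀ (i : Fin n) (a : α), R i a a = true)
    (hcomp : ∀ (i : Fin n) (a b : α), R i a b = true ∨ R i b a = true)
    (L : ℕ) (hL : L > (Fintype.card α * n) ^ 5)
    (C : Vertex α → Bool) (hcut : IsCut C) (hcons : Consistent C) :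
    cutCapacity R L C ≤
      (∑ p ∈ (Finset.univ : Finset (α × α)).filter (fun p => p.1 ≠ p.2),
        (Nvot R p.1 p.2 + Nvot R p.2 p.1 + Evot R p.2 p.1)) ∧
    (∑ p ∈ (Finset.univ : Finset (α × α)).filter (fun p => p.1 ≠ p.2),
        (Nvot R p.1 p.2 + Nvot R p.2 p.1 + Evot R p.2 p.1)) ≤
      3 * n * Fintype.card α ^ 2 ∧
    cutCapacity R L C < L ∧
    (∀ Cmin : Vertex α → Bool, IsCut Cmin →
      (∀ C' : Vertex α → Bool, IsCut C' → cutCapacity R L Cmin ≤ cutCapacity R L C') →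
      cutCapacity R L Cmin < L) := by
  obtain ⟨hs, ht⟩ := hcut
  have hN : ∀ a b : α, Nvot R a b ≤ n := fun a b => by
    simpa [Nvot] using (Finset.card_filter_le Finset.univ
      (fun i : Fin n => R i a b ∧ ¬ R i b a)).trans (by simp)
  have hE : ∀ a b : α, Evot R a b ≤ n := fun a b => by
    simpa [Evot] using (Finset.card_filter_le Finset.univ
      (fun i : Fin n => R i a b ∧ R i b a)).trans (by simp)
  have h1 : cutCapacity R L C ≤
      (∑ p ∈ (Finset.univ : Finset (α × α)).filter (fun p => p.1 ≠ p.2),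
        (Nvot R p.1 p.2 + Nvot R p.2 p.1 + Evot R p.2 p.1)) := by
    unfold cutCapacity
    apply Finset.sum_le_sum
    intro p hp
    rw [Finset.mem_filter] at hp
    rw [hcons p.1 p.2 hp.2]
    have hneg : ∀ x : Bool, ¬ (x = true ∧ ¬ x = true) := fun x h => h.2 h.1
    rw [if_neg (hneg _)]
    split_ifs <;> omega
  have h2 : (∑ p ∈ (Finset.univ : Finset (α × α)).filter (fun p => p.1 ≠ p.2),
        (Nvot R p.1 p.2 + Nvot R p.2 p.1 + Evot R p.2 p.1)) ≤
      3 * n * Fintype.card α ^ 2 := by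
    calc (∑ p ∈ (Finset.univ : Finset (α × α)).filter (fun p => p.1 ≠ p.2),
        (Nvot R p.1 p.2 + Nvot R p.2 p.1 + Evot R p.2 p.1))
        ≤ ∑ _p ∈ (Finset.univ : Finset (α × α)).filter (fun p => p.1 ≠ p.2), 3 * n :=
          Finset.sum_le_sum (fun p _ => by
            have := hN p.1 p.2; have := hN p.2 p.1; have := hE p.2 p.1; omega)
      _ = ((Finset.univ : Finset (α × α)).filter (fun p => p.1 ≠ p.2)).card * (3 * n) := by
          rw [Finset.sum_const, smul_eq_mul]
      _ ≤ Fintype.card α ^ 2 * (3 * n) := by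
          apply Nat.mul_le_mul_right
          calc ((Finset.univ : Finset (α × α)).filter (fun p => p.1 ≠ p.2)).card
              ≤ (Finset.univ : Finset (α × α)).card := Finset.card_filter_le _ _
            _ = Fintype.card α ^ 2 := by simp [Fintype.card_prod, sq]
      _ = 3 * n * Fintype.card α ^ 2 := by ring
  have hSL : 3 * n * Fintype.card α ^ 2 < L ∨
      (∑ p ∈ (Finset.univ : Finset (α × α)).filter (fun p => p.1 ≠ p.2),
        (Nvot R p.1 p.2 + Nvot R p.2 p.1 + Evot R p.2 p.1)) = 0 := by
    rcases Nat.eq_zero_or_pos n with hn | hn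
    · left
      subst hn
      simp only [Nat.mul_zero, Nat.zero_pow, Nat.mul_zero] at hL ⊢
      omega
    rcases le_or_gt (Fintype.card α) 1 with hm | hm
    · right
      have : ((Finset.univ : Finset (α × α)).filter (fun p => p.1 ≠ p.2)) = ∅ := by
        apply Finset.filter_false_of_mem
        intro p _
        simpa using Fintype.card_le_one_iff.mp hm p.1 p.2
      rw [this, Finset.sum_empty]
    · left
      have hm2 : 2 ≤ Fintype.card α := hm
      have : 3 * n * Fintype.card α ^ 2 ≤ (Fintype.card α * n) ^ 5 := by
        have e : (Fintype.card α * n) ^ 5 = Fintype.card α ^ 3 * n ^ 5 * Fintype.card α ^ 2 := by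
          ring
        rw [e]
        have h3 : 3 ≤ Fintype.card α ^ 3 := by
          calc 3 ≤ 2 ^ 3 := by norm_num
            _ ≤ Fintype.card α ^ 3 := Nat.pow_le_pow_left hm2 3
        have h5 : n ≤ n ^ 5 := Nat.le_self_pow (by norm_num) n
        exact Nat.mul_le_mul_right _ (Nat.mul_le_mul h3 h5)
      omega
  have hcapL : cutCapacity R L C < L := by
    rcases hSL with h | h
    · omega
    · have : cutCapacity R L C = 0 := by omega
      omega
  exact ⟨h1, h2, hcapL, fun Cmin _ hmin => lt_of_le_of_lt (hmin C ⟨hs, ht⟩) hcapL⟩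
end

section
/- Every minimum s-t cut of the network G(R) is consistent, i.e., in every s-t cut of minimum capacity, for each ordered pair (a,b) of distinct alternatives the node v_(a,b) lies on the same side of the cut as the node of a. -/
theorem Nvot_le_n {α : Type} [Fintype α] [DecidableEq α] {n : ℕ}
    (R : Fin n → α → α → Bool) (a b : α) : Nvot R a b ≤ n := by
  classical
  calc Nvot R a b ≤ (Finset.univ : Finset (Fin n)).card := Finset.card_filter_le _ _
    _ = n := by simp

/-- Every minimum s-t cut of `G(R)` is consistent: for each
ordered pair `(a,b)` of distinct alternatives, the node `v_(a,b)` lies on the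
same side of the cut as the node of `a`. -/
theorem stmt4 {α : Type} [Fintype α] [DecidableEq α] {n : ℕ}
    (R : Fin n → α → α → Bool)
    (hrefl : ∀ (i : Fin n) (a : α), R i a a = true)
    (hcomp : ∀ (i : Fin n) (a b : α), R i a b = true ∨ R i b a = true)
    (L : ℕ) (hL : L > (Fintype.card α * n) ^ 5)
    (C : Vertex α → Bool) (hcut : IsCut C)
    (hmin : ∀ C' : Vertex α → Bool, IsCut C' → cutCapacity R L C ≤ cutCapacity R L C') :
    Consistent C := by
  classical
  intro a b hab
  by_contra hne
  -- the alternative cut: everything but t on the source side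
  set C' : Vertex α → Bool := fun v => match v with
    | Vertex.t => false
    | _ => true with hC'def
  have hC'cut : IsCut C' := ⟨rfl, rfl⟩
  -- capacity of C' is at most m^2 * n
  have hC'cap : cutCapacity R L C' ≤ Fintype.card α ^ 2 * n := by
    unfold cutCapacity
    have h1 : ∀ p ∈ (Finset.univ : Finset (α × α)).filter (fun p => p.1 ≠ p.2),
        ((if C' Vertex.s ∧ ¬ C' (.pair p.1 p.2) then Nvot R p.1 p.2 else 0) +
         (if C' (.pair p.1 p.2) ∧ ¬ C' Vertex.t then Nvot R p.2 p.1 else 0) +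
         (if C' (.alt p.1) ∧ ¬ C' (.pair p.1 p.2) then L else 0) +
         (if C' (.pair p.1 p.2) ∧ ¬ C' (.alt p.1) then L else 0) +
         (if C' (.alt p.1) ∧ ¬ C' (.alt p.2) then Evot R p.2 p.1 else 0)) ≤ n := by
      intro p _
      simp only [hC'def]
      simpa using Nvot_le_n R p.2 p.1
    calc (∑ p ∈ (Finset.univ : Finset (α × α)).filter (fun p => p.1 ≠ p.2),
          ((if C' Vertex.s ∧ ¬ C' (.pair p.1 p.2) then Nvot R p.1 p.2 else 0) +
           (if C' (.pair p.1 p.2) ∧ ¬ C' Vertex.t then Nvot R p.2 p.1 else 0) +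
           (if C' (.alt p.1) ∧ ¬ C' (.pair p.1 p.2) then L else 0) +
           (if C' (.pair p.1 p.2) ∧ ¬ C' (.alt p.1) then L else 0) +
           (if C' (.alt p.1) ∧ ¬ C' (.alt p.2) then Evot R p.2 p.1 else 0)))
        ≤ ∑ _p ∈ (Finset.univ : Finset (α × α)).filter (fun p => p.1 ≠ p.2), n :=
          Finset.sum_le_sum h1
      _ = ((Finset.univ : Finset (α × α)).filter (fun p => p.1 ≠ p.2)).card * n := by
          simp [Finset.sum_const, Nat.smul_one_eq_cast]
      _ ≤ (Finset.univ : Finset (α × α)).card * n :=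
          Nat.mul_le_mul_right n (Finset.card_filter_le _ _)
      _ = Fintype.card α ^ 2 * n := by
          simp [Fintype.card_prod, sq]
  -- capacity of C is at least L
  have hCcap : L ≤ cutCapacity R L C := by
    unfold cutCapacity
    have hmem : (a, b) ∈ (Finset.univ : Finset (α × α)).filter (fun p => p.1 ≠ p.2) := by
      simp [hab]
    refine le_trans ?_ (Finset.single_le_sum (f := fun p : α × α =>
      ((if C Vertex.s ∧ ¬ C (.pair p.1 p.2) then Nvot R p.1 p.2 else 0) +
       (if C (.pair p.1 p.2) ∧ ¬ C Vertex.t then Nvot R p.2 p.1 else 0) +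
       (if C (.alt p.1) ∧ ¬ C (.pair p.1 p.2) then L else 0) +
       (if C (.pair p.1 p.2) ∧ ¬ C (.alt p.1) then L else 0) +
       (if C (.alt p.1) ∧ ¬ C (.alt p.2) then Evot R p.2 p.1 else 0)))
      (fun _ _ => Nat.zero_le _) hmem)
    cases hpa : C (.pair a b) <;> cases ha : C (.alt a) <;>
      simp_all <;> omega
  -- m ≥ 2 since a ≠ b
  have hm : 2 ≤ Fintype.card α := Fintype.one_lt_card_iff.mpr ⟨a, b, hab⟩
  have hpow : Fintype.card α ^ 2 * n ≤ (Fintype.card α * n) ^ 5 := by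
    rcases Nat.eq_zero_or_pos n with hn | hn
    · simp [hn]
    · calc Fintype.card α ^ 2 * n ≤ Fintype.card α ^ 5 * n ^ 5 :=
          Nat.mul_le_mul (Nat.pow_le_pow_right (by omega) (by norm_num))
            (Nat.le_self_pow (by norm_num) n)
        _ = (Fintype.card α * n) ^ 5 := (mul_pow _ _ _).symm
  have := hmin C' hC'cut
  omega
end

section
/- For every consistent s-t cut (A*,B*) of the network G(R), letting S ⊆ A be the set of alternatives whose nodes lie in A*, the capacity of (A*,B*) equals the total disagreement of the dichotomous weak order O_S with the profile R. -/
section Aux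

variable {α : Type} [Fintype α] [DecidableEq α] {n : ℕ}

lemma sum_swap_pairs {M : Type} [AddCommMonoid M] (f : α × α → M) :
    ∑ p ∈ Finset.univ.filter (fun p : α × α => p.1 ≠ p.2), f p
  = ∑ p ∈ Finset.univ.filter (fun p : α × α => p.1 ≠ p.2), f p.swap := by
  apply Finset.sum_nbij' (fun p => Prod.swap p) (fun p => Prod.swap p) <;>
    simp [ne_comm]

lemma Evot_comm (R : Fin n → α → α → Bool) (a b : α) : Evot R a b = Evot R b a := by
  unfold Evot; congr 1; apply Finset.filter_congr; intro i _
  simp [and_comm]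

lemma count_not (R : Fin n → α → α → Bool)
    (hcomp : ∀ (i : Fin n) (a b : α), R i a b = true ∨ R i b a = true) (a b : α) :
    (Finset.univ.filter (fun i : Fin n => ¬ R i a b)).card = Nvot R b a := by
  unfold Nvot; congr 1; apply Finset.filter_congr; intro i _
  rcases hcomp i a b with h | h <;> cases h2 : R i a b <;> cases h3 : R i b a <;> simp_all

lemma count_yes (R : Fin n → α → α → Bool) (a b : α) :
    (Finset.univ.filter (fun i : Fin n => R i a b = true)).card
      = Nvot R a b + Evot R a b := by
  unfold Nvot Evot
  rw [← Finset.filter_filter, ← Finset.filter_filter]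
  have := Finset.card_filter_add_card_filter_not
    (s := Finset.univ.filter (fun i : Fin n => R i a b = true))
    (p := fun i => R i b a = true)
  simp only [Bool.not_eq_true, Bool.decide_eq_true] at this ⊢
  omega

lemma td_eq (R : Fin n → α → α → Bool) (S : Finset α) :
    totalDisagreement R S = ∑ p : α × α,
      (Finset.univ.filter (fun i : Fin n => R i p.1 p.2 ≠ OS S p.1 p.2)).card := by
  unfold totalDisagreement
  simp only [Finset.card_filter]
  rw [Finset.sum_comm]

end Aux

/-- For every consistent s-t cut `(A*,B*)` of `G(R)`, letting
`S` be the set of alternatives whose nodes lie in `A*`, the capacity of the cut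
equals the total disagreement of the dichotomous weak order `O_S` with `R`. -/
theorem stmt5 {α : Type} [Fintype α] [DecidableEq α] {n : ℕ}
    (R : Fin n → α → α → Bool)
    (hrefl : ∀ (i : Fin n) (a : α), R i a a = true)
    (hcomp : ∀ (i : Fin n) (a b : α), R i a b = true ∨ R i b a = true)
    (L : ℕ) (hL : L > (Fintype.card α * n) ^ 5)
    (C : Vertex α → Bool) (hcut : IsCut C) (hcons : Consistent C) :
    cutCapacity R L C =
      totalDisagreement R (Finset.univ.filter (fun a : α => C (.alt a) = true)) := by
  classical
  obtain ⟨hs, ht⟩ := hcut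
  set S : Finset α := Finset.univ.filter (fun a : α => C (.alt a) = true) with hS
  set T : Finset (α × α) := Finset.univ.filter (fun p : α × α => p.1 ≠ p.2) with hT
  set F : α × α → ℕ := fun p =>
    (if ¬ C (.alt p.1) = true then Nvot R p.1 p.2 else Nvot R p.2 p.1) +
    (if C (.alt p.1) = true ∧ ¬ C (.alt p.2) = true then Evot R p.2 p.1 else 0) with hF
  set D : α × α → ℕ := fun p =>
    if C (.alt p.1) = true ∨ ¬ C (.alt p.2) = true then Nvot R p.2 p.1
    else Nvot R p.1 p.2 + Evot R p.1 p.2 with hD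
  have hOSiff : ∀ a b : α, OS S a b = true ↔ (C (.alt a) = true ∨ ¬ C (.alt b) = true) := by
    intro a b; simp [OS, hS]
  -- capacity equals sum of F over T
  have hcap : cutCapacity R L C = ∑ p ∈ T, F p := by
    unfold cutCapacity
    apply Finset.sum_congr rfl
    intro p hp
    simp only [Finset.mem_filter] at hp
    have h1 := hcons p.1 p.2 hp.2
    simp only [hF, hs, ht, h1]
    cases h2 : C (.alt p.1) <;> cases h3 : C (.alt p.2) <;> simp [h2, h3]
  -- disagreement equals sum of D over T
  have hdis : totalDisagreement R S = ∑ p ∈ T, D p := by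
    rw [td_eq]
    rw [← Finset.sum_filter_add_sum_filter_not Finset.univ (fun p : α × α => p.1 ≠ p.2)]
    have hdiag : ∑ p ∈ Finset.univ.filter (fun p : α × α => ¬ p.1 ≠ p.2),
        (Finset.univ.filter (fun i : Fin n => R i p.1 p.2 ≠ OS S p.1 p.2)).card = 0 := by
      apply Finset.sum_eq_zero
      intro p hp
      rw [Finset.mem_filter, not_ne_iff] at hp
      obtain ⟨-, hpe⟩ := hp
      rw [Finset.card_eq_zero, Finset.filter_eq_empty_iff]
      intro i _
      have h1 : OS S p.2 p.2 = true := by simp [OS]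
      simp [hpe, hrefl i p.2, h1]
    rw [hdiag, add_zero]
    apply Finset.sum_congr rfl
    intro p hp
    simp only [hD]
    by_cases h1 : C (.alt p.1) = true ∨ ¬ C (.alt p.2) = true
    · have h2 : OS S p.1 p.2 = true := (hOSiff p.1 p.2).2 h1
      rw [if_pos h1, ← count_not R hcomp p.1 p.2]
      congr 1; apply Finset.filter_congr; intro i _; simp [h2]
    · have h2 : OS S p.1 p.2 = false := by
        rw [Bool.eq_false_iff]
        intro hc
        exact h1 ((hOSiff p.1 p.2).1 hc)
      rw [if_neg h1, ← count_yes R p.1 p.2]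
      congr 1; apply Finset.filter_congr; intro i _; simp [h2]
  -- pairwise doubling identity
  have key : ∀ p ∈ T, F p + F p.swap = D p + D p.swap := by
    intro p hp
    have he := Evot_comm R p.1 p.2
    simp only [hF, hD, Prod.fst_swap, Prod.snd_swap]
    cases h2 : C (.alt p.1) <;> cases h3 : C (.alt p.2) <;>
      simp [h2, h3] <;> omega
  have sF : (∑ p ∈ T, F p) + (∑ p ∈ T, F p) = ∑ p ∈ T, (F p + F p.swap) := by
    rw [hT]
    exact (Finset.sum_add_distrib.trans (by rw [← sum_swap_pairs F])).symm
  have sD : (∑ p ∈ T, D p) + (∑ p ∈ T, D p) = ∑ p ∈ T, (D p + D p.swap) := by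
    rw [hT]
    exact (Finset.sum_add_distrib.trans (by rw [← sum_swap_pairs D])).symm
  have hdouble : (∑ p ∈ T, F p) + (∑ p ∈ T, F p) = (∑ p ∈ T, D p) + (∑ p ∈ T, D p) := by
    rw [sF, sD]
    exact Finset.sum_congr rfl key
  rw [hcap, hdis]
  omega
end

section
/- The minimum capacity over all s-t cuts of the network G(R) equals MP(R, 2-WO), the minimum over all subsets S ⊆ A of the total disagreement of the dichotomous weak order O_S with the profile R. -/
namespace Stmt8Aux

open Finset

variable {α : Type} [Fintype α] [DecidableEq α] {n : ℕ}

/-- The cut associated to a top class `S`. -/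
def cutOf (S : Finset α) : Vertex α → Bool
  | .s => true
  | .t => false
  | .alt a => a ∈ S
  | .pair a _ => a ∈ S

lemma cutOf_isCut (S : Finset α) : IsCut (cutOf (α := α) S) := ⟨rfl, rfl⟩

lemma cutOf_consistent (S : Finset α) : Consistent (cutOf (α := α) S) :=
  fun _ _ _ => rfl

lemma filter_cutOf (S : Finset α) :
    Finset.univ.filter (fun a => cutOf S (.alt a) = true) = S := by
  ext a; simp [cutOf]

lemma card_filter_R (R : Fin n → α → α → Bool) (a b : α) :
    (Finset.univ.filter (fun i : Fin n => R i a b = true)).card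
      = Nvot R a b + Evot R a b := by
  rw [Nvot, Evot, Finset.card_filter, Finset.card_filter, Finset.card_filter,
    ← Finset.sum_add_distrib]
  refine Finset.sum_congr rfl fun i _ => ?_
  cases hx : R i a b <;> cases hy : R i b a <;> simp

lemma card_disagree (R : Fin n → α → α → Bool)
    (hcomp : ∀ (i : Fin n) (a b : α), R i a b = true ∨ R i b a = true)
    (S : Finset α) (a b : α) :
    (Finset.univ.filter (fun i : Fin n => R i a b ≠ OS S a b)).card
      = if a ∈ S ∨ b ∉ S then Nvot R b a else Nvot R a b + Evot R a b := by
  by_cases h : a ∈ S ∨ b ∉ S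
  · have hOS : OS S a b = true := by simp only [OS, decide_eq_true_eq]; exact h
    rw [if_pos h, Nvot, Finset.card_filter, Finset.card_filter]
    refine Finset.sum_congr rfl fun i _ => ?_
    rcases hcomp i a b with h1 | h1 <;> cases hx : R i a b <;> simp_all [hOS]
  · have hOS : OS S a b = false := by
      simp only [OS, decide_eq_false_iff_not]; exact h
    rw [if_neg h, ← card_filter_R]
    congr 1
    ext i
    simp [hOS]

lemma cap_term (R : Fin n → α → α → Bool) (L : ℕ) (C : Vertex α → Bool)
    (hC : IsCut C) (hcons : Consistent C) (a b : α) (hab : a ≠ b) :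
    (if C .s ∧ ¬ C (.pair a b) then Nvot R a b else 0) +
    (if C (.pair a b) ∧ ¬ C .t then Nvot R b a else 0) +
    (if C (.alt a) ∧ ¬ C (.pair a b) then L else 0) +
    (if C (.pair a b) ∧ ¬ C (.alt a) then L else 0) +
    (if C (.alt a) ∧ ¬ C (.alt b) then Evot R b a else 0)
      = (if C (.alt a) = true then Nvot R b a else Nvot R a b) +
        (if C (.alt a) = true ∧ ¬ C (.alt b) = true then Evot R b a else 0) := by
  rw [hcons a b hab, hC.1, hC.2]
  cases h : C (.alt a) <;> simp [h]

lemma key (R : Fin n → α → α → Bool)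
    (hrefl : ∀ (i : Fin n) (a : α), R i a a = true)
    (hcomp : ∀ (i : Fin n) (a b : α), R i a b = true ∨ R i b a = true)
    (L : ℕ) (C : Vertex α → Bool) (hC : IsCut C) (hcons : Consistent C) :
    cutCapacity R L C
      = totalDisagreement R (Finset.univ.filter (fun a => C (.alt a) = true)) := by
  classical
  set S := Finset.univ.filter (fun a : α => C (.alt a) = true) with hSdef
  have hmem : ∀ a : α, a ∈ S ↔ C (.alt a) = true := by
    intro a; simp [hSdef]
  set D := (Finset.univ : Finset (α × α)).filter (fun p => p.1 ≠ p.2) with hD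
  have hRHS : totalDisagreement R S
      = ∑ p ∈ D, (if C (.alt p.1) = true ∨ ¬ C (.alt p.2) = true
          then Nvot R p.2 p.1 else Nvot R p.1 p.2 + Evot R p.1 p.2) := by
    rw [totalDisagreement]
    have h1 : ∀ i : Fin n,
        ((Finset.univ : Finset (α × α)).filter
            (fun p => R i p.1 p.2 ≠ OS S p.1 p.2)).card
        = ∑ p : α × α, (if R i p.1 p.2 ≠ OS S p.1 p.2 then 1 else 0) := fun i =>
      Finset.card_filter _ _
    simp_rw [h1]
    rw [Finset.sum_comm]
    have h2 : ∀ p : α × α,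
        (∑ i : Fin n, if R i p.1 p.2 ≠ OS S p.1 p.2 then 1 else 0)
        = ((Finset.univ.filter
            (fun i : Fin n => R i p.1 p.2 ≠ OS S p.1 p.2)).card) :=
      fun p => (Finset.card_filter _ _).symm
    simp_rw [h2]
    rw [← Finset.sum_filter_add_sum_filter_not (Finset.univ : Finset (α × α))
      (fun p => p.1 ≠ p.2)]
    have hdiag : ∑ p ∈ (Finset.univ : Finset (α × α)).filter (fun p => ¬ p.1 ≠ p.2),
        ((Finset.univ.filter
            (fun i : Fin n => R i p.1 p.2 ≠ OS S p.1 p.2)).card) = 0 := by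
      refine Finset.sum_eq_zero fun p hp => ?_
      simp only [Finset.mem_filter, not_not] at hp
      rw [Finset.card_eq_zero, Finset.filter_eq_empty_iff]
      intro i _
      rw [hp.2]
      simp [hrefl, OS, em]
    rw [hdiag, add_zero]
    refine Finset.sum_congr rfl fun p hp => ?_
    rw [card_disagree R hcomp S p.1 p.2]
    simp only [hmem]
  have hLHS : cutCapacity R L C
      = ∑ p ∈ D, ((if C (.alt p.1) = true then Nvot R p.2 p.1 else Nvot R p.1 p.2) +
          (if C (.alt p.1) = true ∧ ¬ C (.alt p.2) = true then Evot R p.2 p.1 else 0)) := by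
    rw [cutCapacity]
    refine Finset.sum_congr rfl fun p hp => ?_
    have hab : p.1 ≠ p.2 := (Finset.mem_filter.mp hp).2
    exact cap_term R L C hC hcons p.1 p.2 hab
  rw [hLHS, hRHS]
  have hswap : ∀ h : α × α → ℕ, ∑ p ∈ D, h p.swap = ∑ p ∈ D, h p := by
    intro h
    refine Finset.sum_equiv (Equiv.prodComm α α) (fun p => ?_) (fun p _ => rfl)
    simp [hD, ne_comm]
  have key2 : ∀ F G : α × α → ℕ,
      (∀ p ∈ D, F p + F p.swap = G p + G p.swap) →
      ∑ p ∈ D, F p = ∑ p ∈ D, G p := by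
    intro F G hFG
    have h3 : ∑ p ∈ D, (F p + F p.swap) = ∑ p ∈ D, (G p + G p.swap) :=
      Finset.sum_congr rfl hFG
    rw [Finset.sum_add_distrib, Finset.sum_add_distrib, hswap F, hswap G] at h3
    omega
  refine key2 _ _ fun p hp => ?_
  cases hCa : C (.alt p.1) <;> cases hCb : C (.alt p.2) <;>
    simp [hCa, hCb] <;> omega

lemma incons_ge (R : Fin n → α → α → Bool) (L : ℕ) (C : Vertex α → Bool)
    (hncons : ¬ Consistent C) : L ≤ cutCapacity R L C := by
  rw [Consistent] at hncons
  push_neg at hncons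
  obtain ⟨a, b, hab, hne⟩ := hncons
  rw [cutCapacity]
  have hmem : (a, b) ∈ (Finset.univ : Finset (α × α)).filter (fun p => p.1 ≠ p.2) := by
    simp [hab]
  refine le_trans ?_ (Finset.single_le_sum (fun p _ => Nat.zero_le _) hmem)
  cases hx : C (.alt a) <;> cases hy : C (.pair a b) <;>
    simp_all <;> omega

lemma disag_empty_le (R : Fin n → α → α → Bool) :
    totalDisagreement R (∅ : Finset α) ≤ (Fintype.card α * n) ^ 5 := by
  have h1 : totalDisagreement R (∅ : Finset α) ≤ n * (Fintype.card α) ^ 2 := by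
    rw [totalDisagreement]
    calc ∑ i : Fin n, ((Finset.univ : Finset (α × α)).filter
          (fun p => R i p.1 p.2 ≠ OS (∅ : Finset α) p.1 p.2)).card
        ≤ ∑ _i : Fin n, (Fintype.card α) ^ 2 := by
          refine Finset.sum_le_sum fun i _ => ?_
          calc _ ≤ (Finset.univ : Finset (α × α)).card := Finset.card_filter_le _ _
            _ = (Fintype.card α) ^ 2 := by
              simp [Finset.card_univ, Fintype.card_prod, sq]
      _ = n * (Fintype.card α) ^ 2 := by simp [mul_comm]
  rcases Nat.eq_zero_or_pos (Fintype.card α) with hm | hm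
  · simp [hm] at h1 ⊢; omega
  rcases Nat.eq_zero_or_pos n with hn | hn
  · simp [hn] at h1 ⊢; omega
  refine le_trans h1 ?_
  have e1 : n ≤ n ^ 5 := Nat.le_self_pow (by norm_num) n
  have e2 : (Fintype.card α) ^ 2 ≤ (Fintype.card α) ^ 5 :=
    Nat.pow_le_pow_right hm (by norm_num)
  calc n * (Fintype.card α) ^ 2 ≤ n ^ 5 * (Fintype.card α) ^ 5 :=
        Nat.mul_le_mul e1 e2
    _ = (Fintype.card α * n) ^ 5 := by rw [mul_pow]; ring

end Stmt8Aux

/-- The minimum capacity over all s-t cuts of `G(R)` equals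
`MP(R, 2-WO)`, the minimum over all subsets `S ⊆ A` of the total disagreement of
the dichotomous weak order `O_S` with the profile `R`. -/
theorem stmt8 {α : Type} [Fintype α] [DecidableEq α] {n : ℕ}
    (R : Fin n → α → α → Bool)
    (hrefl : ∀ (i : Fin n) (a : α), R i a a = true)
    (hcomp : ∀ (i : Fin n) (a b : α), R i a b = true ∨ R i b a = true)
    (L : ℕ) (hL : L > (Fintype.card α * n) ^ 5) :
    sInf {c : ℕ | ∃ C : Vertex α → Bool, IsCut C ∧ cutCapacity R L C = c} =
      sInf {d : ℕ | ∃ S : Finset α, totalDisagreement R S = d} := by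
  classical
  have hSD_ne : {d : ℕ | ∃ S : Finset α, totalDisagreement R S = d}.Nonempty :=
    ⟨totalDisagreement R ∅, ∅, rfl⟩
  have hSC_ne : {c : ℕ | ∃ C : Vertex α → Bool, IsCut C ∧ cutCapacity R L C = c}.Nonempty :=
    ⟨cutCapacity R L (Stmt8Aux.cutOf ∅), Stmt8Aux.cutOf ∅, Stmt8Aux.cutOf_isCut ∅, rfl⟩
  apply le_antisymm
  · obtain ⟨S, hS⟩ := Nat.sInf_mem hSD_ne
    have hc := Stmt8Aux.key R hrefl hcomp L (Stmt8Aux.cutOf S)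
      (Stmt8Aux.cutOf_isCut S) (Stmt8Aux.cutOf_consistent S)
    rw [Stmt8Aux.filter_cutOf] at hc
    calc sInf {c : ℕ | ∃ C : Vertex α → Bool, IsCut C ∧ cutCapacity R L C = c}
        ≤ cutCapacity R L (Stmt8Aux.cutOf S) :=
          Nat.sInf_le ⟨Stmt8Aux.cutOf S, Stmt8Aux.cutOf_isCut S, rfl⟩
      _ = totalDisagreement R S := hc
      _ = _ := hS
  · obtain ⟨C, hcut, hcap⟩ := Nat.sInf_mem hSC_ne
    by_cases hcons : Consistent C
    · have hc := Stmt8Aux.key R hrefl hcomp L C hcut hcons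
      calc sInf {d : ℕ | ∃ S : Finset α, totalDisagreement R S = d}
          ≤ totalDisagreement R (Finset.univ.filter (fun a => C (.alt a) = true)) :=
            Nat.sInf_le ⟨_, rfl⟩
        _ = cutCapacity R L C := hc.symm
        _ = _ := hcap
    · have h1 : sInf {d : ℕ | ∃ S : Finset α, totalDisagreement R S = d}
          ≤ totalDisagreement R (∅ : Finset α) := Nat.sInf_le ⟨∅, rfl⟩
      have h2 := Stmt8Aux.disag_empty_le R
      have h3 := Stmt8Aux.incons_ge R L C hcons
      omega
end
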